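/- arXiv:quant-ph/0610263 — 2 statements merged into one kernel-verified Lean document; each statement's English description precedes it below -/
import Mathlib

section
/- The uncertainty relation is equivalent to all symplectic eigenvalues being at least one: let Γ be a real symmetric positive definite 2N×2N matrix with Williamson form S Γ Sᵀ = diag(a₁,a₁,…,a_N,a_N), where S ∈ Sp(2N,ℝ) and a_j > 0. Then the complex Hermitian matrix Γ + iσ (entries of Γ and σ viewed as complex numbers) is positive semidefinite if and only if a_j ≥ 1 for all j = 1,…,N. -/
/-! Conjugating by a symplectic `S` fixes `σ`, so `S (Γ + iσ) Sᵀ = D + iσ` with `D` the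
Williamson diagonal; symplectic matrices are invertible (`σ² = -1`), and positive
semidefiniteness is invariant under invertible congruence. For `D + iσ` the quadratic form
splits over the modes: with `u = x_{2j}`, `v = x_{2j+1}` the `j`-th summand is
`(a_j - 1)(|u|² + |v|²) + |u + iv|²`, nonnegative when `a_j ≥ 1`, and equal to `2(a_j - 1)`
at `u = 1`, `v = i`. -/

open Matrix Polynomial
open ComplexOrder

noncomputable section

/-- The standard symplectic form matrix: block diagonal with 2×2 blocks [[0,1],[-1,0]]. -/
def symplForm (n : ℕ) : Matrix (Fin n) (Fin n) ℝ :=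
  Matrix.of fun i j =>
    if (i : ℕ) + 1 = (j : ℕ) ∧ (i : ℕ) % 2 = 0 then 1
    else if (j : ℕ) + 1 = (i : ℕ) ∧ (j : ℕ) % 2 = 0 then -1 else 0

/-- Membership in the real symplectic group: `S σ Sᵀ = σ`. -/
def IsSymplectic {n : ℕ} (S : Matrix (Fin n) (Fin n) ℝ) : Prop :=
  S * symplForm n * Sᵀ = symplForm n

/-- The Williamson diagonal matrix `diag(a₁,a₁,…,a_N,a_N)`. -/
def WDiag {N : ℕ} (a : Fin N → ℝ) : Matrix (Fin (2 * N)) (Fin (2 * N)) ℝ :=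
  Matrix.diagonal fun i => a ⟨(i : ℕ) / 2, by have := i.isLt; omega⟩

/-- A covariance matrix: real symmetric with `γ + iσ` positive semidefinite. -/
def IsCovMatrix {n : ℕ} (γ : Matrix (Fin n) (Fin n) ℝ) : Prop :=
  γ.IsSymm ∧
    (γ.map (Complex.ofReal) + Complex.I • (symplForm n).map Complex.ofReal).PosSemidef

/-- The block-diagonal direct sum of two square matrices. -/
def dirSum {m n : ℕ} (A : Matrix (Fin m) (Fin m) ℝ) (B : Matrix (Fin n) (Fin n) ℝ) :
    Matrix (Fin (m + n)) (Fin (m + n)) ℝ :=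
  Matrix.reindex finSumFinEquiv finSumFinEquiv (Matrix.fromBlocks A 0 0 B)

/-- Separability of a covariance matrix with respect to the split `A|B`. -/
def IsSepCov (nA nB : ℕ) (γ : Matrix (Fin (nA + nB)) (Fin (nA + nB)) ℝ) : Prop :=
  ∃ (γA : Matrix (Fin nA) (Fin nA) ℝ) (γB : Matrix (Fin nB) (Fin nB) ℝ),
    IsCovMatrix γA ∧ IsCovMatrix γB ∧ (γ - dirSum γA γB).PosSemidef

def uncertaintyMatrix {n : ℕ} (γ : Matrix (Fin n) (Fin n) ℝ) : Matrix (Fin n) (Fin n) ℂ :=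
  γ.map Complex.ofReal + Complex.I • (symplForm n).map Complex.ofReal

lemma symplForm_transpose (n : ℕ) : (symplForm n)ᵀ = -symplForm n := by
  ext i j
  simp only [transpose_apply, Matrix.neg_apply, symplForm, of_apply]
  split_ifs <;> first | omega | norm_num

lemma conjTranspose_map_ofReal {m n : Type*} (A : Matrix m n ℝ) :
    (A.map Complex.ofReal)ᴴ = Aᵀ.map Complex.ofReal := by
  ext i j
  simp

lemma uncertaintyMatrix_congr {n : ℕ} {S : Matrix (Fin n) (Fin n) ℝ} (hS : IsSymplectic S)
    (γ : Matrix (Fin n) (Fin n) ℝ) :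
    S.map Complex.ofReal * uncertaintyMatrix γ * star (S.map Complex.ofReal) =
      uncertaintyMatrix (S * γ * Sᵀ) := by
  have map_ofReal_mul : ∀ A B : Matrix (Fin n) (Fin n) ℝ,
      (A * B).map Complex.ofReal = A.map Complex.ofReal * B.map Complex.ofReal :=
    fun _ _ ↦ Matrix.map_mul (f := Complex.ofRealHom)
  rw [star_eq_conjTranspose, conjTranspose_map_ofReal, uncertaintyMatrix, uncertaintyMatrix,
    mul_add, add_mul, Matrix.mul_smul, Matrix.smul_mul, ← map_ofReal_mul, ← map_ofReal_mul,
    ← map_ofReal_mul, ← map_ofReal_mul, hS]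

lemma uncertaintyMatrix_isHermitian {n : ℕ} {γ : Matrix (Fin n) (Fin n) ℝ} (hγ : γ.IsSymm) :
    (uncertaintyMatrix γ).IsHermitian := by
  rw [IsHermitian, uncertaintyMatrix, conjTranspose_add, conjTranspose_smul,
    conjTranspose_map_ofReal, conjTranspose_map_ofReal, hγ.eq, symplForm_transpose]
  simp [Matrix.map_neg]

section Modes

variable {N : ℕ}

def modeIndex (N : ℕ) : Fin N × Fin 2 ≃ Fin (2 * N) :=
  finProdFinEquiv.trans (finCongr (Nat.mul_comm N 2))

@[simp]
lemma modeIndex_val (j : Fin N) (r : Fin 2) : (modeIndex N (j, r) : ℕ) = r + 2 * j := by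
  simp [modeIndex]

lemma sum_eq_sum_modeIndex {M : Type*} [AddCommMonoid M] (g : Fin (2 * N) → M) :
    ∑ i, g i = ∑ j, (g (modeIndex N (j, 0)) + g (modeIndex N (j, 1))) := by
  rw [← (modeIndex N).sum_comp, Fintype.sum_prod_type]
  simp only [Fin.sum_univ_two]

lemma symplForm_modeIndex_zero (j : Fin N) :
    symplForm (2 * N) (modeIndex N (j, 0)) = Pi.single (modeIndex N (j, 1)) 1 := by
  ext k
  simp only [symplForm, of_apply, Pi.single_apply, Fin.ext_iff, modeIndex_val]
  split_ifs <;> simp_all <;> omega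

lemma symplForm_modeIndex_one (j : Fin N) :
    symplForm (2 * N) (modeIndex N (j, 1)) = -Pi.single (modeIndex N (j, 0)) 1 := by
  ext k
  simp only [symplForm, of_apply, Pi.neg_apply, Pi.single_apply, Fin.ext_iff, modeIndex_val]
  split_ifs <;> simp_all <;> omega

lemma symplForm_mul_self : symplForm (2 * N) * symplForm (2 * N) = -1 := by
  ext i k
  obtain ⟨⟨j, r⟩, rfl⟩ := (modeIndex N).surjective i
  fin_cases r <;>
    simp [mul_apply_eq_vecMul, symplForm_modeIndex_zero, symplForm_modeIndex_one, neg_vecMul,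
      one_apply, Pi.single_apply, eq_comm]

lemma IsSymplectic.isUnit {S : Matrix (Fin (2 * N)) (Fin (2 * N)) ℝ} (hS : IsSymplectic S) :
    IsUnit S := by
  have hσ : IsUnit (symplForm (2 * N)).det :=
    isUnit_det_of_right_inverse (B := -symplForm (2 * N)) (by simp [symplForm_mul_self])
  have hdet : S.det * S.det * (symplForm (2 * N)).det = 1 * (symplForm (2 * N)).det := by
    have := congrArg det hS
    rw [det_mul, det_mul, det_transpose] at this
    linear_combination this
  rw [isUnit_iff_isUnit_det, isUnit_iff_ne_zero]
  intro h0
  simp only [h0, mul_zero, zero_mul, one_mul] at hdet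
  exact hσ.ne_zero hdet.symm

lemma wDiag_modeIndex (a : Fin N → ℝ) (j : Fin N) (r : Fin 2) :
    WDiag a (modeIndex N (j, r)) (modeIndex N (j, r)) = a j := by
  simp only [WDiag, diagonal_apply_eq, modeIndex_val]
  congr
  omega

lemma symplForm_map_mulVec_zero (x : Fin (2 * N) → ℂ) (j : Fin N) :
    ((symplForm (2 * N)).map Complex.ofReal *ᵥ x) (modeIndex N (j, 0)) =
      x (modeIndex N (j, 1)) := by
  simp [mulVec, dotProduct, symplForm_modeIndex_zero, Pi.single_apply, apply_ite]

lemma symplForm_map_mulVec_one (x : Fin (2 * N) → ℂ) (j : Fin N) :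
    ((symplForm (2 * N)).map Complex.ofReal *ᵥ x) (modeIndex N (j, 1)) =
      -x (modeIndex N (j, 0)) := by
  simp [mulVec, dotProduct, symplForm_modeIndex_one, Pi.single_apply, apply_ite]

lemma wDiag_map_mulVec (a : Fin N → ℝ) (x : Fin (2 * N) → ℂ) (j : Fin N) (r : Fin 2) :
    ((WDiag a).map Complex.ofReal *ᵥ x) (modeIndex N (j, r)) = a j * x (modeIndex N (j, r)) := by
  rw [← wDiag_modeIndex a j r, WDiag, diagonal_map (by simp), mulVec_diagonal, diagonal_apply_eq]

lemma star_dotProduct_uncertaintyMatrix_wDiag_mulVec (a : Fin N → ℝ) (x : Fin (2 * N) → ℂ) :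
    star x ⬝ᵥ (uncertaintyMatrix (WDiag a) *ᵥ x) =
      ∑ j, (((a j : ℂ) - 1) *
          (star (x (modeIndex N (j, 0))) * x (modeIndex N (j, 0)) +
            star (x (modeIndex N (j, 1))) * x (modeIndex N (j, 1))) +
        star (x (modeIndex N (j, 0)) + Complex.I * x (modeIndex N (j, 1))) *
          (x (modeIndex N (j, 0)) + Complex.I * x (modeIndex N (j, 1)))) := by
  rw [dotProduct, sum_eq_sum_modeIndex]
  refine Finset.sum_congr rfl fun j _ ↦ ?_
  simp only [uncertaintyMatrix, add_mulVec, smul_mulVec, Pi.add_apply, Pi.smul_apply, smul_eq_mul,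
    Pi.star_apply, wDiag_map_mulVec, symplForm_map_mulVec_zero, symplForm_map_mulVec_one,
    star_add, star_mul', Complex.star_def, Complex.conj_I]
  linear_combination (x (modeIndex N (j, 1)) * (starRingEnd ℂ) (x (modeIndex N (j, 1)))) *
    Complex.I_mul_I

lemma uncertaintyMatrix_wDiag_posSemidef_iff (a : Fin N → ℝ) :
    (uncertaintyMatrix (WDiag a)).PosSemidef ↔ ∀ j, 1 ≤ a j := by
  constructor
  · intro h j
    have := h.dotProduct_mulVec_nonneg
      (Pi.single (modeIndex N (j, 0)) 1 + Pi.single (modeIndex N (j, 1)) Complex.I)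
    rw [star_dotProduct_uncertaintyMatrix_wDiag_mulVec, Finset.sum_eq_single j
      (fun k _ hk ↦ by simp [(modeIndex N).injective.eq_iff, hk]) (by simp)] at this
    simp only [Fin.isValue, Pi.add_apply, Pi.single_eq_same, ne_eq, (modeIndex N).injective.eq_iff,
      Prod.mk.injEq, zero_ne_one, and_false, not_false_eq_true, Pi.single_eq_of_ne, add_zero,
      star_one, mul_one, one_ne_zero, zero_add, RCLike.star_def, Complex.conj_I, neg_mul,
      Complex.I_mul_I, neg_neg, add_neg_cancel, star_zero, mul_zero] at this
    have h2 : (0 : ℂ) ≤ ((2 * (a j - 1) : ℝ) : ℂ) := by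
      convert this using 1; push_cast; ring
    linarith [Complex.zero_le_real.mp h2]
  · intro h
    refine .of_dotProduct_mulVec_nonneg (uncertaintyMatrix_isHermitian (isSymm_diagonal _))
      fun x ↦ ?_
    rw [star_dotProduct_uncertaintyMatrix_wDiag_mulVec]
    have ha : ∀ j, 0 ≤ (a j : ℂ) - 1 := fun j ↦ sub_nonneg.mpr (by exact_mod_cast h j)
    exact Finset.sum_nonneg fun j _ ↦ add_nonneg (mul_nonneg (ha j)
      (add_nonneg (star_mul_self_nonneg _) (star_mul_self_nonneg _))) (star_mul_self_nonneg _)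

end Modes

theorem uncertainty_iff_symplectic_eigenvalues_ge_one_general (N : ℕ)
    (Γ : Matrix (Fin (2 * N)) (Fin (2 * N)) ℝ)
    (S : Matrix (Fin (2 * N)) (Fin (2 * N)) ℝ) (a : Fin N → ℝ)
    (hS : IsSymplectic S) (hW : S * Γ * Sᵀ = WDiag a) :
    (Γ.map Complex.ofReal + Complex.I • (symplForm (2 * N)).map Complex.ofReal).PosSemidef ↔
      ∀ j, 1 ≤ a j := by
  have hU : IsUnit (S.map Complex.ofReal) := hS.isUnit.map Complex.ofRealHom.mapMatrix
  rw [← uncertaintyMatrix_wDiag_posSemidef_iff, ← hW, ← uncertaintyMatrix_congr hS,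
    hU.posSemidef_star_right_conjugate_iff]
  rfl

/-- The uncertainty relation `Γ + iσ ≥ 0` holds iff all symplectic eigenvalues are `≥ 1`. -/
theorem uncertainty_iff_symplectic_eigenvalues_ge_one (N : ℕ) (hN : 1 ≤ N)
    (Γ : Matrix (Fin (2 * N)) (Fin (2 * N)) ℝ) (hΓsymm : Γ.IsSymm) (hΓpos : Γ.PosDef)
    (S : Matrix (Fin (2 * N)) (Fin (2 * N)) ℝ) (a : Fin N → ℝ)
    (hS : IsSymplectic S) (ha : ∀ j, 0 < a j) (hW : S * Γ * Sᵀ = WDiag a) :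
    (Γ.map Complex.ofReal + Complex.I • (symplForm (2 * N)).map Complex.ofReal).PosSemidef ↔
      ∀ j, 1 ≤ a j :=
  uncertainty_iff_symplectic_eigenvalues_ge_one_general N Γ S a hS hW
end
end

section
/- Entanglement witnesses completely characterize separability of covariance matrices: for a bipartite split N = N_A + N_B, a 2N×2N covariance matrix γ is separable with respect to the split A|B if and only if tr(Z·γ) ≥ 1 for every entanglement witness Z for the split A|B. -/
open Matrix Polynomial
open ComplexOrder

noncomputable section

/-- An entanglement witness for the split `A|B`: a real symmetric matrix `Z` with
`tr(Zγ') ≥ 1` for every separable covariance matrix `γ'`. -/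
def IsEntWitness (nA nB : ℕ) (Z : Matrix (Fin (nA + nB)) (Fin (nA + nB)) ℝ) : Prop :=
  Z.IsSymm ∧ ∀ γ' : Matrix (Fin (nA + nB)) (Fin (nA + nB)) ℝ,
    IsCovMatrix γ' → IsSepCov nA nB γ' → 1 ≤ (Z * γ').trace

/-!
Separable covariance matrices form a closed convex set `S` with `S + t • γ ⊆ S` for `t ≥ 0`,
because `γ ≥ 0`. If `γ ∉ S`, Hahn–Banach gives a functional `f` and a level `u` with
`f s < u < f γ` on `S`; along the rays `s + t • γ` this forces `f γ ≤ 0`, hence `u < 0`, and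
`f / u` separates at level `1`. Writing `f / u` on symmetric matrices as `M ↦ tr (Z * M)` with `Z`
symmetric turns it into an entanglement witness with `tr (Z * γ) < 1`.
-/

theorem isClosed_of_forall_isClosed_inter_closedBall {X : Type*} [PseudoMetricSpace X]
    {s : Set X} (x : X) (h : ∀ r, IsClosed (s ∩ Metric.closedBall x r)) : IsClosed s := by
  refine isClosed_of_closure_subset fun y hy => ?_
  have hyr : y ∈ Metric.ball x (dist y x + 1) := Metric.mem_ball.2 (by linarith)
  have hsub : Metric.ball x (dist y x + 1) ∩ s ⊆ s ∩ Metric.closedBall x (dist y x + 1) :=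
    fun z hz => ⟨hz.2, Metric.ball_subset_closedBall hz.1⟩
  have hy' := closure_mono hsub (Metric.isOpen_ball.inter_closure ⟨hyr, hy⟩)
  rw [(h _).closure_eq] at hy'
  exact hy'.1

theorem exists_lt_one_le_of_add_smul_mem {E : Type*} [TopologicalSpace E] [AddCommGroup E]
    [Module ℝ E] [IsTopologicalAddGroup E] [ContinuousSMul ℝ E] [LocallyConvexSpace ℝ E]
    {S : Set E} {x : E} (hconv : Convex ℝ S) (hclosed : IsClosed S) (hx : x ∉ S)
    (hray : ∀ s ∈ S, ∀ t : ℝ, 0 ≤ t → s + t • x ∈ S) :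
    ∃ φ : E →L[ℝ] ℝ, φ x < 1 ∧ ∀ s ∈ S, 1 ≤ φ s := by
  rcases S.eq_empty_or_nonempty with rfl | ⟨s₀, hs₀⟩
  · exact ⟨0, by simp, by simp⟩
  obtain ⟨f, u, hfS, hux⟩ := geometric_hahn_banach_closed_point hconv hclosed hx
  -- `f` stays below `u` along the ray `s₀ + t • x`, so `f x ≤ 0` and the level `u` is negative.
  have hfx : f x ≤ 0 := by
    by_contra! hpos
    have := hfS _ (hray s₀ hs₀ ((u - f s₀) / f x) (div_nonneg (by linarith [hfS s₀ hs₀]) hpos.le))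
    rw [map_add, map_smul, smul_eq_mul, div_mul_cancel₀ _ hpos.ne'] at this
    linarith
  have hu : u < 0 := hux.trans_le hfx
  refine ⟨u⁻¹ • f, ?_, fun s hs => ?_⟩
  · rw [_root_.smul_apply, smul_eq_mul, inv_mul_eq_div]
    exact (div_lt_one_of_neg hu).2 hux
  · rw [_root_.smul_apply, smul_eq_mul, inv_mul_eq_div]
    exact (one_le_div_of_neg hu).2 (hfS s hs).le

section PosSemidef

variable {n : Type*}

theorem Matrix.isClosed_setOf_posSemidef [Fintype n] {𝕜 : Type*} [RCLike 𝕜] :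
    IsClosed {M : Matrix n n 𝕜 | M.PosSemidef} := by
  have : {M : Matrix n n 𝕜 | M.PosSemidef} =
      {M | Mᴴ = M} ∩ ⋂ x : n → 𝕜, {M | 0 ≤ star x ⬝ᵥ M *ᵥ x} := by
    ext M
    simp only [Set.mem_inter_iff, Set.mem_iInter]
    exact posSemidef_iff_dotProduct_mulVec
  rw [this]
  exact (isClosed_eq continuous_id.matrix_conjTranspose continuous_id).inter
    (isClosed_iInter fun x => isClosed_Ici.preimage
      (continuous_const.dotProduct (continuous_id.matrix_mulVec continuous_const)))

theorem Matrix.PosSemidef.apply_sq_le {A : Matrix n n ℝ} (hA : A.PosSemidef) (i j : n) :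
    A i j ^ 2 ≤ A i i * A j j := by
  have hdet := (hA.submatrix ![i, j]).det_nonneg
  have hsymm : A j i = A i j := by simpa using hA.1.apply i j
  rw [det_fin_two] at hdet
  simp only [submatrix_apply, Matrix.cons_val_zero, Matrix.cons_val_one, hsymm] at hdet
  linarith

theorem Matrix.PosSemidef.map_ofReal [Fintype n] {A : Matrix n n ℝ} (hA : A.PosSemidef) :
    (A.map Complex.ofReal).PosSemidef := by
  obtain ⟨m, v, rfl⟩ := posSemidef_iff_eq_sum_vecMulVec.mp hA
  have : (∑ i, vecMulVec (v i) (star (v i))).map Complex.ofReal =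
      ∑ i, vecMulVec (Complex.ofReal ∘ v i) (star (Complex.ofReal ∘ v i)) := by
    ext a b
    simp [Matrix.sum_apply, vecMulVec_apply]
  rw [this]
  exact posSemidef_sum _ fun i _ => posSemidef_vecMulVec_self_star _

theorem Matrix.dotProduct_map_ofReal_mulVec [Fintype n] (A : Matrix n n ℝ) (x : n → ℝ) :
    star (Complex.ofReal ∘ x) ⬝ᵥ A.map Complex.ofReal *ᵥ (Complex.ofReal ∘ x) =
      ((x ⬝ᵥ A *ᵥ x : ℝ) : ℂ) := by
  simp [dotProduct, mulVec, Finset.mul_sum]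

end PosSemidef

theorem Matrix.exists_isSymm_trace_mul_eq {n : Type*} [Fintype n] [DecidableEq n]
    (φ : Matrix n n ℝ →ₗ[ℝ] ℝ) :
    ∃ Z : Matrix n n ℝ, Z.IsSymm ∧ ∀ M : Matrix n n ℝ, M.IsSymm → (Z * M).trace = φ M := by
  set L : Matrix n n ℝ := of fun i j => φ (single j i 1)
  have hL : ∀ M, (L * M).trace = φ M := by
    intro M
    conv_rhs => rw [matrix_eq_sum_single M]
    simp only [map_sum, trace, diag, mul_apply, L, of_apply]
    rw [Finset.sum_comm]
    refine Finset.sum_congr rfl fun i _ => Finset.sum_congr rfl fun j _ => ?_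
    have : single i j (M i j) = M i j • single i j (1 : ℝ) := by
      rw [smul_single, smul_eq_mul, mul_one]
    rw [this, map_smul, smul_eq_mul, mul_comm]
  refine ⟨(2 : ℝ)⁻¹ • (L + Lᵀ), (isSymm_add_transpose_self L).smul _, fun M hM => ?_⟩
  rw [smul_mul, add_mul, trace_smul, trace_add, ← hM.eq, trace_transpose_mul, hM.eq, hL,
    smul_eq_mul]
  ring

section EntrywiseNorm

attribute [local instance] Matrix.normedAddCommGroup Matrix.normedSpace

theorem Matrix.PosSemidef.norm_le_of_diag_le {n : Type*} [Fintype n] {A : Matrix n n ℝ}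
    (hA : A.PosSemidef) {c : ℝ} (hc : 0 ≤ c) (hdiag : ∀ i, A i i ≤ c) : ‖A‖ ≤ c := by
  refine (norm_le_iff hc).2 fun i j => ?_
  rw [Real.norm_eq_abs]
  refine abs_le_of_sq_le_sq ?_ hc
  calc A i j ^ 2 ≤ A i i * A j j := hA.apply_sq_le i j
    _ ≤ c ^ 2 := by rw [sq]; exact mul_le_mul (hdiag i) (hdiag j) hA.diag_nonneg hc

theorem Matrix.exists_isSymm_trace_mul_lt_one_le {n : Type*} [Fintype n] [DecidableEq n]
    {S : Set (Matrix n n ℝ)} {x : Matrix n n ℝ} (hS : ∀ s ∈ S, s.IsSymm) (hx : x.IsSymm)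
    (hconv : Convex ℝ S) (hclosed : IsClosed S) (hxS : x ∉ S)
    (hray : ∀ s ∈ S, ∀ t : ℝ, 0 ≤ t → s + t • x ∈ S) :
    ∃ Z : Matrix n n ℝ, Z.IsSymm ∧ (Z * x).trace < 1 ∧ ∀ s ∈ S, 1 ≤ (Z * s).trace := by
  have : LocallyConvexSpace ℝ (Matrix n n ℝ) := NormedSpace.toLocallyConvexSpace
  obtain ⟨φ, hφx, hφS⟩ := exists_lt_one_le_of_add_smul_mem hconv hclosed hxS hray
  obtain ⟨Z, hZ, hZφ⟩ := exists_isSymm_trace_mul_eq φ.toLinearMap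
  refine ⟨Z, hZ, by simpa [hZφ x hx] using hφx, fun s hs => ?_⟩
  simpa [hZφ s (hS s hs)] using hφS s hs

end EntrywiseNorm

namespace IsCovMatrix

variable {n : ℕ} {γ : Matrix (Fin n) (Fin n) ℝ}

theorem posSemidef (hγ : IsCovMatrix γ) : γ.PosSemidef := by
  refine .of_dotProduct_mulVec_nonneg (isHermitian_iff_isSymm.2 hγ.1) fun x => ?_
  have h := hγ.2.dotProduct_mulVec_nonneg (Complex.ofReal ∘ x)
  rw [add_mulVec, dotProduct_add, smul_mulVec, dotProduct_smul, dotProduct_map_ofReal_mulVec,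
    dotProduct_map_ofReal_mulVec] at h
  simpa using (Complex.le_def.mp h).1

theorem add_posSemidef (hγ : IsCovMatrix γ) {P : Matrix (Fin n) (Fin n) ℝ}
    (hP : P.PosSemidef) : IsCovMatrix (γ + P) := by
  refine ⟨hγ.1.add (isHermitian_iff_isSymm.1 hP.1), ?_⟩
  rw [Matrix.map_add _ Complex.ofReal_add, add_right_comm]
  exact hγ.2.add hP.map_ofReal

end IsCovMatrix

section CovMatrixSet

variable {n : ℕ}

theorem convex_setOf_isCovMatrix : Convex ℝ {γ : Matrix (Fin n) (Fin n) ℝ | IsCovMatrix γ} := by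
  intro x hx y hy a b ha hb hab
  refine ⟨(hx.1.smul a).add (hy.1.smul b), ?_⟩
  have : (a • x + b • y).map Complex.ofReal + Complex.I • (symplForm n).map Complex.ofReal =
      a • (x.map Complex.ofReal + Complex.I • (symplForm n).map Complex.ofReal) +
        b • (y.map Complex.ofReal + Complex.I • (symplForm n).map Complex.ofReal) := by
    ext i j
    simp only [Matrix.add_apply, Matrix.smul_apply, map_apply, Complex.real_smul, smul_eq_mul]
    push_cast
    linear_combination (-Complex.I * symplForm n i j) * (by exact_mod_cast hab : (a : ℂ) + b = 1)
  rw [this]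
  exact (hx.2.smul ha).add (hy.2.smul hb)

theorem isClosed_setOf_isCovMatrix : IsClosed {γ : Matrix (Fin n) (Fin n) ℝ | IsCovMatrix γ} :=
  (isClosed_eq continuous_id.matrix_transpose continuous_id).inter
    (isClosed_setOf_posSemidef.preimage
      ((continuous_id.matrix_map Complex.continuous_ofReal).add continuous_const))

end CovMatrixSet

section DirSum

variable {m n : ℕ}

theorem dirSum_add (A₁ A₂ : Matrix (Fin m) (Fin m) ℝ) (B₁ B₂ : Matrix (Fin n) (Fin n) ℝ) :
    dirSum (A₁ + A₂) (B₁ + B₂) = dirSum A₁ B₁ + dirSum A₂ B₂ := by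
  simp only [dirSum, ← coe_reindexLinearEquiv ℝ ℝ, ← map_add, fromBlocks_add, add_zero]

theorem dirSum_smul (t : ℝ) (A : Matrix (Fin m) (Fin m) ℝ) (B : Matrix (Fin n) (Fin n) ℝ) :
    dirSum (t • A) (t • B) = t • dirSum A B := by
  simp only [dirSum, ← coe_reindexLinearEquiv ℝ ℝ, ← map_smul, fromBlocks_smul, smul_zero]

theorem dirSum_apply_inl_inl (A : Matrix (Fin m) (Fin m) ℝ) (B : Matrix (Fin n) (Fin n) ℝ)
    (i j : Fin m) : dirSum A B (finSumFinEquiv (.inl i)) (finSumFinEquiv (.inl j)) = A i j := by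
  simp [dirSum]

theorem dirSum_apply_inr_inr (A : Matrix (Fin m) (Fin m) ℝ) (B : Matrix (Fin n) (Fin n) ℝ)
    (i j : Fin n) : dirSum A B (finSumFinEquiv (.inr i)) (finSumFinEquiv (.inr j)) = B i j := by
  simp [dirSum]

theorem continuous_dirSum :
    Continuous fun p : Matrix (Fin m) (Fin m) ℝ × Matrix (Fin n) (Fin n) ℝ => dirSum p.1 p.2 :=
  (continuous_fst.matrix_fromBlocks continuous_const continuous_const
    continuous_snd).matrix_reindex _ _

end DirSum

namespace IsSepCov

variable {nA nB : ℕ} {γ : Matrix (Fin (nA + nB)) (Fin (nA + nB)) ℝ}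

theorem add_posSemidef (hγ : IsSepCov nA nB γ) {P : Matrix (Fin (nA + nB)) (Fin (nA + nB)) ℝ}
    (hP : P.PosSemidef) : IsSepCov nA nB (γ + P) := by
  obtain ⟨γA, γB, hA, hB, hle⟩ := hγ
  exact ⟨γA, γB, hA, hB, by simpa only [add_sub_right_comm] using hle.add hP⟩

end IsSepCov

theorem convex_setOf_isSepCov {nA nB : ℕ} :
    Convex ℝ {γ : Matrix (Fin (nA + nB)) (Fin (nA + nB)) ℝ | IsSepCov nA nB γ} := by
  rintro x ⟨xA, xB, hxA, hxB, hx⟩ y ⟨yA, yB, hyA, hyB, hy⟩ a b ha hb hab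
  refine ⟨a • xA + b • yA, a • xB + b • yB, convex_setOf_isCovMatrix hxA hyA ha hb hab,
    convex_setOf_isCovMatrix hxB hyB ha hb hab, ?_⟩
  have : a • x + b • y - dirSum (a • xA + b • yA) (a • xB + b • yB) =
      a • (x - dirSum xA xB) + b • (y - dirSum yA yB) := by
    rw [dirSum_add, dirSum_smul, dirSum_smul]
    module
  rw [this]
  exact (hx.smul ha).add (hy.smul hb)

section SeparableClosed

attribute [local instance] Matrix.normedAddCommGroup Matrix.normedSpace

theorem norm_le_of_posSemidef_sub_dirSum {nA nB : ℕ}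
    {γ : Matrix (Fin (nA + nB)) (Fin (nA + nB)) ℝ} {γA : Matrix (Fin nA) (Fin nA) ℝ}
    {γB : Matrix (Fin nB) (Fin nB) ℝ} (hA : γA.PosSemidef) (hB : γB.PosSemidef)
    (h : (γ - dirSum γA γB).PosSemidef) : ‖γA‖ ≤ ‖γ‖ ∧ ‖γB‖ ≤ ‖γ‖ := by
  have hγ : ∀ k, γ k k ≤ ‖γ‖ := fun k =>
    (le_abs_self _).trans (by simpa using norm_entry_le_entrywise_sup_norm γ (i := k) (j := k))
  constructor
  · refine hA.norm_le_of_diag_le (norm_nonneg γ) fun i => ?_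
    have := h.diag_nonneg (i := finSumFinEquiv (.inl i))
    rw [Matrix.sub_apply, dirSum_apply_inl_inl] at this
    linarith [hγ (finSumFinEquiv (.inl i))]
  · refine hB.norm_le_of_diag_le (norm_nonneg γ) fun i => ?_
    have := h.diag_nonneg (i := finSumFinEquiv (.inr i))
    rw [Matrix.sub_apply, dirSum_apply_inr_inr] at this
    linarith [hγ (finSumFinEquiv (.inr i))]

theorem isClosed_setOf_isSepCov (nA nB : ℕ) :
    IsClosed {γ : Matrix (Fin (nA + nB)) (Fin (nA + nB)) ℝ | IsSepCov nA nB γ} := by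
  set D : Set (Matrix (Fin nA) (Fin nA) ℝ × Matrix (Fin nB) (Fin nB) ℝ ×
      Matrix (Fin (nA + nB)) (Fin (nA + nB)) ℝ) :=
    {p | IsCovMatrix p.1 ∧ IsCovMatrix p.2.1 ∧ (p.2.2 - dirSum p.1 p.2.1).PosSemidef}
  have hD : IsClosed D :=
    (isClosed_setOf_isCovMatrix.preimage continuous_fst).inter
      ((isClosed_setOf_isCovMatrix.preimage continuous_snd.fst).inter
        (isClosed_setOf_posSemidef.preimage (continuous_snd.snd.sub
          (continuous_dirSum.comp (continuous_fst.prodMk continuous_snd.fst)))))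
  refine isClosed_of_forall_isClosed_inter_closedBall 0 fun r => ?_
  -- Since `‖γA‖, ‖γB‖ ≤ ‖γ‖`, the decompositions of the `γ` in a closed ball form a compact set.
  have hball : {γ | IsSepCov nA nB γ} ∩ Metric.closedBall 0 r = (fun p => p.2.2) ''
      (D ∩ Metric.closedBall 0 r ×ˢ Metric.closedBall 0 r ×ˢ Metric.closedBall 0 r) := by
    ext γ
    constructor
    · rintro ⟨⟨γA, γB, hA, hB, h⟩, hγ⟩
      rw [mem_closedBall_zero_iff] at hγ
      obtain ⟨hAγ, hBγ⟩ := norm_le_of_posSemidef_sub_dirSum hA.posSemidef hB.posSemidef h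
      exact ⟨(γA, γB, γ), ⟨⟨hA, hB, h⟩, mem_closedBall_zero_iff.2 (hAγ.trans hγ),
        mem_closedBall_zero_iff.2 (hBγ.trans hγ), mem_closedBall_zero_iff.2 hγ⟩, rfl⟩
    · rintro ⟨⟨γA, γB, γ⟩, ⟨⟨hA, hB, h⟩, -, -, hγ⟩, rfl⟩
      exact ⟨⟨γA, γB, hA, hB, h⟩, hγ⟩
  rw [hball]
  exact ((((isCompact_closedBall _ _).prod ((isCompact_closedBall _ _).prod
    (isCompact_closedBall _ _))).inter_left hD).image continuous_snd.snd).isClosed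

end SeparableClosed

theorem witnesses_characterize_separability_general (NA NB : ℕ)
    (γ : Matrix (Fin (2 * NA + 2 * NB)) (Fin (2 * NA + 2 * NB)) ℝ) (hγ : IsCovMatrix γ) :
    IsSepCov (2 * NA) (2 * NB) γ ↔
      ∀ Z : Matrix (Fin (2 * NA + 2 * NB)) (Fin (2 * NA + 2 * NB)) ℝ,
        IsEntWitness (2 * NA) (2 * NB) Z → 1 ≤ (Z * γ).trace := by
  refine ⟨fun hsep Z hZ => hZ.2 γ hγ hsep, fun hwit => ?_⟩
  by_contra hγsep
  set S := {g | IsCovMatrix g ∧ IsSepCov (2 * NA) (2 * NB) g}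
  have hray : ∀ g ∈ S, ∀ t : ℝ, 0 ≤ t → g + t • γ ∈ S := fun g hg t ht =>
    ⟨hg.1.add_posSemidef (hγ.posSemidef.smul ht), hg.2.add_posSemidef (hγ.posSemidef.smul ht)⟩
  obtain ⟨Z, hZ, hZγ, hZS⟩ := exists_isSymm_trace_mul_lt_one_le (S := S) (fun g hg => hg.1.1)
    hγ.1 (convex_setOf_isCovMatrix.inter convex_setOf_isSepCov)
    (isClosed_setOf_isCovMatrix.inter (isClosed_setOf_isSepCov _ _)) (fun h => hγsep h.2) hray
  exact hZγ.not_ge (hwit Z ⟨hZ, fun γ' hcov hsep => hZS γ' ⟨hcov, hsep⟩⟩)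

/-- Entanglement witnesses completely characterize separability of covariance matrices. -/
theorem witnesses_characterize_separability (NA NB : ℕ) (hNA : 1 ≤ NA) (hNB : 1 ≤ NB)
    (γ : Matrix (Fin (2 * NA + 2 * NB)) (Fin (2 * NA + 2 * NB)) ℝ) (hγ : IsCovMatrix γ) :
    IsSepCov (2 * NA) (2 * NB) γ ↔
      ∀ Z : Matrix (Fin (2 * NA + 2 * NB)) (Fin (2 * NA + 2 * NB)) ℝ,
        IsEntWitness (2 * NA) (2 * NB) Z → 1 ≤ (Z * γ).trace :=
  witnesses_characterize_separability_general NA NB γ hγ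
end
end
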